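/- Let G and H be topological groups, π : H → G a surjective continuous open group homomorphism with discrete kernel L (a covering homomorphism). Then a continuous group-homomorphic section s : G → H of π exists if and only if the covering π is trivial, i.e., the identity component of H meets L only in the identity element. In particular, if some nontrivial element of L is connected to the identity of H by a path, no continuous splitting exists. -/

import Mathlib

/-!
If `s` is a continuous homomorphic section, then `x ↦ x * s (π x)⁻¹` is a continuous retraction
of `H` onto the discrete kernel, so it is constant on the identity component, which therefore
meets the kernel only in `1`. Conversely, in a locally path-connected group the path component
of `1` is the identity component, an open subgroup; if it meets the kernel trivially, `π`
restricts to it injectively, and surjectively because its image is an open, hence clopen,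
subgroup of the connected group `G`. This restriction is a continuous open bijective
homomorphism, and its inverse is the section.
-/

open Function

namespace MonoidHom

theorem domRestrict_injective_of_forall_mem_ker {H G : Type*} [Group H] [Group G]
    (π : H →* G) {K : Subgroup H} (hK : ∀ h ∈ π.ker, h ∈ K → h = 1) :
    Injective (π.domRestrict K) :=
  (injective_iff_map_eq_one _).mpr fun k hk => Subtype.ext (hK k hk k.2)

variable {H G : Type*} [TopologicalSpace H] [Group H] [TopologicalSpace G] [Group G]

theorem eq_one_of_mem_ker_of_mem_connectedComponent [IsTopologicalGroup H]
    {π : H →* G} (hπ : Continuous π) [DiscreteTopology π.ker]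
    {s : G →* H} (hs : Continuous s) (hπs : π.comp s = MonoidHom.id G)
    {h : H} (hker : h ∈ π.ker) (hh : h ∈ connectedComponent 1) : h = 1 := by
  have hπs' (g : G) : π (s g) = g := DFunLike.congr_fun hπs g
  let r : H → π.ker := fun x => ⟨x * (s (π x))⁻¹, by simp [mem_ker, hπs']⟩
  have hr : Continuous r := by fun_prop
  have hrh : r h ∈ r '' connectedComponent 1 := Set.mem_image_of_mem r hh
  rw [hr.image_connectedComponent_eq_singleton, Set.mem_singleton_iff, Subtype.ext_iff] at hrh
  simpa [r, mem_ker.mp hker] using hrh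

theorem domRestrict_surjective_of_isOpen [IsTopologicalGroup G] [ConnectedSpace G]
    {π : H →* G} (hπ : IsOpenMap π) {K : Subgroup H} (hK : IsOpen (K : Set H)) :
    Surjective (π.domRestrict K) := by
  have hopen : IsOpen ((K.map π : Subgroup G) : Set G) := by
    rw [Subgroup.coe_map]
    exact hπ _ hK
  have htop : K.map π = ⊤ := SetLike.coe_injective <|
    IsClopen.eq_univ ⟨(K.map π).isClosed_of_isOpen hopen, hopen⟩ ⟨1, (K.map π).one_mem⟩
  rw [← range_eq_top, domRestrict_range, htop]

theorem exists_continuous_section_of_domRestrict_bijective {π : H →* G} (hπc : Continuous π)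
    (hπo : IsOpenMap π) {K : Subgroup H} (hK : IsOpen (K : Set H))
    (hbij : Bijective (π.domRestrict K)) :
    ∃ s : G →* H, Continuous s ∧ π.comp s = MonoidHom.id G := by
  let e : K ≃* G := MulEquiv.ofBijective _ hbij
  let e' : K ≃ₜ G := e.toEquiv.toHomeomorphOfContinuousOpen (hπc.comp continuous_subtype_val)
    (hπo.comp hK.isOpenMap_subtype_val)
  refine ⟨K.subtype.comp e.symm.toMonoidHom, continuous_subtype_val.comp e'.symm.continuous, ?_⟩
  ext g
  exact e.apply_symm_apply g

end MonoidHom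

theorem stmt_17_general {H G : Type*}
    [TopologicalSpace H] [Group H] [IsTopologicalGroup H] [LocallyPathConnectedSpace H]
    [TopologicalSpace G] [Group G] [IsTopologicalGroup G] [PathConnectedSpace G]
    (π : H →* G) (hcont : Continuous π)
    (hopen : IsOpenMap π) (hdisc : DiscreteTopology π.ker) :
    (∃ s : G →* H, Continuous s ∧ π.comp s = MonoidHom.id G) ↔
      ∀ h : H, h ∈ π.ker → h ∈ pathComponent (1 : H) → h = 1 := by
  simp_rw [pathComponent_eq_connectedComponent]
  constructor
  · rintro ⟨s, hs, hπs⟩ h hker hh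
    exact MonoidHom.eq_one_of_mem_ker_of_mem_connectedComponent hcont hs hπs hker hh
  · intro hker
    have hC : IsOpen (connectedComponent (1 : H)) := isOpen_connectedComponent
    exact MonoidHom.exists_continuous_section_of_domRestrict_bijective hcont hopen
      (K := Subgroup.connectedComponentOfOne H) hC
      ⟨π.domRestrict_injective_of_forall_mem_ker hker,
        MonoidHom.domRestrict_surjective_of_isOpen hopen hC⟩

/-- Splitting criterion for covering homomorphisms of topological groups: a
continuous surjective open homomorphism `π : H → G` with discrete kernel (onto a
path-connected `G`, with `H` locally path-connected) admits a continuous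
homomorphic section if and only if no nontrivial element of the kernel lies in
the path component of the identity of `H`. -/
theorem stmt_17 {H G : Type*}
    [TopologicalSpace H] [Group H] [IsTopologicalGroup H] [LocallyPathConnectedSpace H]
    [TopologicalSpace G] [Group G] [IsTopologicalGroup G] [PathConnectedSpace G]
    [LocallyPathConnectedSpace G]
    (π : H →* G) (hcont : Continuous π) (hsurj : Function.Surjective π)
    (hopen : IsOpenMap π) (hdisc : DiscreteTopology π.ker) :
    (∃ s : G →* H, Continuous s ∧ π.comp s = MonoidHom.id G) ↔
      ∀ h : H, h ∈ π.ker → h ∈ pathComponent (1 : H) → h = 1 :=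
  stmt_17_general π hcont hopen hdisc
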